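/- In the welded braid group WB_{m+2}, for any b_1, b_2 in the image of the natural inclusion WB_m → WB_{m+2}, the following identity holds: b_1 σ_m^{-1} τ_m τ_{m+1} τ_m b_2 σ_m = τ_{m+1} b_1 τ_m b_2 σ_{m+1}^{-1} τ_{m+1} σ_m. (This is the key computation showing a right virtual exchange move is a consequence of welded Markov moves.) -/

import Mathlib

/-- Generators of the virtual/welded braid groups: `Sum.inl i` is σ_i, `Sum.inr i` is τ_i
(indices are 1-based; generators with index out of the range 1,…,m-1 are killed). -/
abbrev VGen := ℕ ⊕ ℕ

def fσ (i : ℕ) : FreeGroup VGen := FreeGroup.of (Sum.inl i)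
def fτ (i : ℕ) : FreeGroup VGen := FreeGroup.of (Sum.inr i)

/-- `i` is a valid generator index for degree `m`, i.e. `1 ≤ i ≤ m-1`. -/
abbrev inR (m i : ℕ) : Prop := 1 ≤ i ∧ i + 1 ≤ m

/-- `|i - j| > 1`. -/
abbrev far (i j : ℕ) : Prop := i + 1 < j ∨ j + 1 < i

/-- Defining relations of the virtual braid group VB_m. -/
def vbRels (m : ℕ) : Set (FreeGroup VGen) :=
  { r | (∃ i j, inR m i ∧ inR m j ∧ far i j ∧ r = fσ i * fσ j * (fσ j * fσ i)⁻¹)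
      ∨ (∃ i, inR m i ∧ inR m (i+1) ∧
            r = fσ i * fσ (i+1) * fσ i * (fσ (i+1) * fσ i * fσ (i+1))⁻¹)
      ∨ (∃ i, inR m i ∧ r = fτ i * fτ i)
      ∨ (∃ i j, inR m i ∧ inR m j ∧ far i j ∧ r = fτ i * fτ j * (fτ j * fτ i)⁻¹)
      ∨ (∃ i, inR m i ∧ inR m (i+1) ∧
            r = fτ i * fτ (i+1) * fτ i * (fτ (i+1) * fτ i * fτ (i+1))⁻¹)
      ∨ (∃ i j, inR m i ∧ inR m j ∧ far i j ∧ r = fσ i * fτ j * (fτ j * fσ i)⁻¹)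
      ∨ (∃ i, inR m i ∧ inR m (i+1) ∧
            r = fσ i * fτ (i+1) * fτ i * (fτ (i+1) * fτ i * fσ (i+1))⁻¹)
      ∨ (∃ i, ¬ inR m i ∧ (r = fσ i ∨ r = fτ i)) }

/-- Defining relations of the welded braid group WB_m: the virtual relations together with
the welded relations τ_i σ_{i+1} σ_i = σ_{i+1} σ_i τ_{i+1}. -/
def wbRels (m : ℕ) : Set (FreeGroup VGen) :=
  vbRels m ∪ { r | ∃ i, inR m i ∧ inR m (i+1) ∧
            r = fτ i * fσ (i+1) * fσ i * (fσ (i+1) * fσ i * fτ (i+1))⁻¹ }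

/-- The virtual braid group of degree `m`. -/
abbrev VB (m : ℕ) := PresentedGroup (vbRels m)

/-- The welded braid group of degree `m`. -/
abbrev WB (m : ℕ) := PresentedGroup (wbRels m)

def vσ (m i : ℕ) : VB m := PresentedGroup.of (Sum.inl i)
def vτ (m i : ℕ) : VB m := PresentedGroup.of (Sum.inr i)
def wσ (m i : ℕ) : WB m := PresentedGroup.of (Sum.inl i)
def wτ (m i : ℕ) : WB m := PresentedGroup.of (Sum.inr i)

/-- The adjacent transposition (i, i+1) (1-based) in the symmetric group on m letters. -/
def adj (m i : ℕ) (h : inR m i) : Equiv.Perm (Fin m) :=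
  Equiv.swap ⟨i - 1, by obtain ⟨h1, h2⟩ := h; omega⟩ ⟨i, by obtain ⟨h1, h2⟩ := h; omega⟩

/-! The braid relation τ_m τ_{m+1} τ_m = τ_{m+1} τ_m τ_{m+1} followed by the mixed relation
σ_m τ_{m+1} τ_m = τ_{m+1} τ_m σ_{m+1} rewrites σ_m⁻¹ τ_m τ_{m+1} τ_m as
τ_{m+1} τ_m σ_{m+1}⁻¹ τ_{m+1}. What remains is to move τ_{m+1} past b₁ and σ_{m+1}⁻¹ τ_{m+1}
past b₂: the image of WB_m commutes with σ_{m+1} and τ_{m+1} because its generators have index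
at most m - 1, hence are far from m + 1 (and the out-of-range generators of WB_m are trivial). -/

namespace PresentedGroup

variable {α G : Type*} [Group G] {rels : Set (FreeGroup α)}

theorem commute_map_of_forall_of (f : PresentedGroup rels →* G) {g : G}
    (h : ∀ a, Commute (f (of a)) g) (x : PresentedGroup rels) : Commute (f x) g := by
  have hx := generated_by rels ((Subgroup.centralizer {g}).comap f)
    (fun a => Subgroup.mem_centralizer_singleton_iff.mpr (h a).eq) x
  exact Subgroup.mem_centralizer_singleton_iff.mp hx

end PresentedGroup

section Relations

variable {m i j : ℕ}

theorem wσ_eq_one (h : ¬ inR m i) : wσ m i = 1 :=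
  PresentedGroup.one_of_mem <| Or.inl <| Or.inr <| Or.inr <| Or.inr <| Or.inr <| Or.inr <|
    Or.inr <| Or.inr ⟨i, h, Or.inl rfl⟩

theorem wτ_eq_one (h : ¬ inR m i) : wτ m i = 1 :=
  PresentedGroup.one_of_mem <| Or.inl <| Or.inr <| Or.inr <| Or.inr <| Or.inr <| Or.inr <|
    Or.inr <| Or.inr ⟨i, h, Or.inr rfl⟩

theorem wσ_commute_wσ (hi : inR m i) (hj : inR m j) (hij : far i j) :
    Commute (wσ m i) (wσ m j) :=
  PresentedGroup.mk_eq_mk_of_mul_inv_mem <| Or.inl <| Or.inl ⟨i, j, hi, hj, hij, rfl⟩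

theorem wτ_commute_wτ (hi : inR m i) (hj : inR m j) (hij : far i j) :
    Commute (wτ m i) (wτ m j) :=
  PresentedGroup.mk_eq_mk_of_mul_inv_mem <| Or.inl <| Or.inr <| Or.inr <| Or.inr <| Or.inl
    ⟨i, j, hi, hj, hij, rfl⟩

theorem wσ_commute_wτ (hi : inR m i) (hj : inR m j) (hij : far i j) :
    Commute (wσ m i) (wτ m j) :=
  PresentedGroup.mk_eq_mk_of_mul_inv_mem <| Or.inl <| Or.inr <| Or.inr <| Or.inr <| Or.inr <|
    Or.inr <| Or.inl ⟨i, j, hi, hj, hij, rfl⟩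

theorem wτ_mul_wτ_mul_wτ (hi : inR m i) (hi' : inR m (i + 1)) :
    wτ m i * wτ m (i + 1) * wτ m i = wτ m (i + 1) * wτ m i * wτ m (i + 1) :=
  PresentedGroup.mk_eq_mk_of_mul_inv_mem <| Or.inl <| Or.inr <| Or.inr <| Or.inr <| Or.inr <|
    Or.inl ⟨i, hi, hi', rfl⟩

theorem wσ_mul_wτ_mul_wτ (hi : inR m i) (hi' : inR m (i + 1)) :
    wσ m i * wτ m (i + 1) * wτ m i = wτ m (i + 1) * wτ m i * wσ m (i + 1) :=
  PresentedGroup.mk_eq_mk_of_mul_inv_mem <| Or.inl <| Or.inr <| Or.inr <| Or.inr <| Or.inr <|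
    Or.inr <| Or.inr <| Or.inl ⟨i, hi, hi', rfl⟩

theorem wσ_inv_mul_wτ_mul_wτ_mul_wτ (hi : inR m i) (hi' : inR m (i + 1)) :
    (wσ m i)⁻¹ * wτ m i * wτ m (i + 1) * wτ m i
      = wτ m (i + 1) * wτ m i * (wσ m (i + 1))⁻¹ * wτ m (i + 1) := by
  set σ := wσ m i
  set σ' := wσ m (i + 1)
  set τ := wτ m i
  set τ' := wτ m (i + 1)
  have hmixed : σ⁻¹ * τ' * τ = τ' * τ * σ'⁻¹ :=
    calc σ⁻¹ * τ' * τ = σ⁻¹ * (τ' * τ * σ') * σ'⁻¹ := by group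
      _ = σ⁻¹ * (σ * τ' * τ) * σ'⁻¹ := by rw [wσ_mul_wτ_mul_wτ hi hi']
      _ = τ' * τ * σ'⁻¹ := by group
  calc σ⁻¹ * τ * τ' * τ = σ⁻¹ * (τ * τ' * τ) := by group
    _ = σ⁻¹ * (τ' * τ * τ') := by rw [wτ_mul_wτ_mul_wτ hi hi']
    _ = σ⁻¹ * τ' * τ * τ' := by group
    _ = τ' * τ * σ'⁻¹ * τ' := by rw [hmixed]

end Relations

theorem WB.map_commute_of_forall_inR {G : Type*} [Group G] {m : ℕ} (f : WB m →* G) {g : G}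
    (hσ : ∀ i, inR m i → Commute (f (wσ m i)) g) (hτ : ∀ i, inR m i → Commute (f (wτ m i)) g)
    (x : WB m) : Commute (f x) g := by
  refine PresentedGroup.commute_map_of_forall_of f (fun a => ?_) x
  rcases a with i | i <;> by_cases hi : inR m i
  · exact hσ i hi
  · change Commute (f (wσ m i)) g
    rw [wσ_eq_one hi, map_one]
    exact Commute.one_left g
  · exact hτ i hi
  · change Commute (f (wτ m i)) g
    rw [wτ_eq_one hi, map_one]
    exact Commute.one_left g

theorem WB.map_commute_wσ_wτ_add_one {m : ℕ} (ι : WB m →* WB (m + 2))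
    (hι : ∀ i, inR m i → ι (wσ m i) = wσ (m + 2) i ∧ ι (wτ m i) = wτ (m + 2) i) (x : WB m) :
    Commute (ι x) (wσ (m + 2) (m + 1)) ∧ Commute (ι x) (wτ (m + 2) (m + 1)) := by
  have hlast : inR (m + 2) (m + 1) := ⟨by omega, by omega⟩
  have hlift : ∀ i, inR m i → inR (m + 2) i := fun i hi => ⟨hi.1, by omega⟩
  have hfar : ∀ i, inR m i → far i (m + 1) := fun i hi => Or.inl (by omega)
  have hfar' : ∀ i, inR m i → far (m + 1) i := fun i hi => Or.inr (by omega)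
  constructor <;> refine WB.map_commute_of_forall_inR ι (fun i hi => ?_) (fun i hi => ?_) x
  · rw [(hι i hi).1]
    exact wσ_commute_wσ (hlift i hi) hlast (hfar i hi)
  · rw [(hι i hi).2]
    exact (wσ_commute_wτ hlast (hlift i hi) (hfar' i hi)).symm
  · rw [(hι i hi).1]
    exact wσ_commute_wτ (hlift i hi) hlast (hfar i hi)
  · rw [(hι i hi).2]
    exact wτ_commute_wτ (hlift i hi) hlast (hfar i hi)

/-- in WB_{m+2}, for b₁, b₂ in the image of WB_m,
b₁ σ_m⁻¹ τ_m τ_{m+1} τ_m b₂ σ_m = τ_{m+1} b₁ τ_m b₂ σ_{m+1}⁻¹ τ_{m+1} σ_m. -/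
theorem stmt7 (m : ℕ) (hm : 1 ≤ m) (ι : WB m →* WB (m+2))
    (hι : ∀ i, inR m i → ι (wσ m i) = wσ (m+2) i ∧ ι (wτ m i) = wτ (m+2) i)
    (b₁ b₂ : WB m) :
    ι b₁ * (wσ (m+2) m)⁻¹ * wτ (m+2) m * wτ (m+2) (m+1) * wτ (m+2) m * ι b₂ * wσ (m+2) m
      = wτ (m+2) (m+1) * ι b₁ * wτ (m+2) m * ι b₂ *
        (wσ (m+2) (m+1))⁻¹ * wτ (m+2) (m+1) * wσ (m+2) m := by
  have hexchange :=
    wσ_inv_mul_wτ_mul_wτ_mul_wτ (m := m + 2) (i := m) ⟨hm, by omega⟩ ⟨by omega, by omega⟩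
  obtain ⟨-, h₁⟩ := WB.map_commute_wσ_wτ_add_one ι hι b₁
  obtain ⟨h₂σ, h₂τ⟩ := WB.map_commute_wσ_wτ_add_one ι hι b₂
  set σ := wσ (m + 2) m
  set σ' := wσ (m + 2) (m + 1)
  set τ := wτ (m + 2) m
  set τ' := wτ (m + 2) (m + 1)
  calc ι b₁ * σ⁻¹ * τ * τ' * τ * ι b₂ * σ = ι b₁ * (σ⁻¹ * τ * τ' * τ) * ι b₂ * σ := by group
    _ = ι b₁ * τ' * τ * (σ'⁻¹ * τ' * ι b₂) * σ := by rw [hexchange]; group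
    _ = τ' * ι b₁ * τ * (ι b₂ * (σ'⁻¹ * τ')) * σ := by
      rw [h₁.eq, (h₂σ.inv_right.mul_right h₂τ).symm.eq]
    _ = τ' * ι b₁ * τ * ι b₂ * σ'⁻¹ * τ' * σ := by group
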